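/- For m, n ≥ 3, the strong odd chromatic number of I_y(G_m, G_n) equals χ_so(W_m) + χ_so(W_n) − 1, where W_k = C_k ∨ K_1 is the wheel on k + 1 vertices. -/

import Mathlib

open SimpleGraph

/-- A coloring `φ` of the vertices of `G` is a strong odd coloring if it is proper and,
for every vertex `v` and every color `c`, the number of neighbors of `v` colored `c`
is either zero or odd. -/
def IsStrongOddColoring {V α : Type*} (G : SimpleGraph V) (φ : V → α) : Prop :=
  (∀ u v : V, G.Adj u v → φ u ≠ φ v) ∧
  ∀ (v : V) (c : α),
    {u : V | G.Adj v u ∧ φ u = c}.ncard = 0 ∨ Odd {u : V | G.Adj v u ∧ φ u = c}.ncard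

/-- The strong odd chromatic number: the least `k` such that `G` admits a strong odd
coloring with `k` colors. -/
noncomputable def strongOddChromaticNumber {V : Type*} (G : SimpleGraph V) : ℕ :=
  sInf {k : ℕ | ∃ φ : V → Fin k, IsStrongOddColoring G φ}

/-- The join `G ∨ H` of two graphs: disjoint copies of `G` and `H` together with all
edges between them. -/
def joinGraph {V W : Type*} (G : SimpleGraph V) (H : SimpleGraph W) :
    SimpleGraph (V ⊕ W) where
  Adj x y :=
    match x, y with
    | Sum.inl a, Sum.inl b => G.Adj a b
    | Sum.inl _, Sum.inr _ => True
    | Sum.inr _, Sum.inl _ => True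
    | Sum.inr a, Sum.inr b => H.Adj a b
  symm := ⟨by rintro (a | a) (b | b) h <;> first | exact h.symm | trivial⟩
  loopless := ⟨by rintro (a | a) h <;> first | exact G.irrefl h | exact H.irrefl h⟩

/-- The wheel graph `W_n = C_n ∨ K_1`. -/
def wheelGraph (n : ℕ) : SimpleGraph (Fin n ⊕ Fin 1) :=
  joinGraph (cycleGraph n) (⊥ : SimpleGraph (Fin 1))

/-- `G_n = C_n ∨ K̄_2`; the two vertices of `K̄_2` are `x_n = Sum.inr 0` and
`y_n = Sum.inr 1`. -/
def cycleJoinTwo (n : ℕ) : SimpleGraph (Fin n ⊕ Fin 2) :=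
  joinGraph (cycleGraph n) (⊥ : SimpleGraph (Fin 2))

/-- The one point union of graphs `G` and `H`, obtained by identifying the vertex
`a` of `G` with the vertex `b` of `H` (the identified vertex is `Sum.inl a`). -/
def onePointUnion {V W : Type*} (G : SimpleGraph V) (H : SimpleGraph W) (a : V) (b : W) :
    SimpleGraph (V ⊕ {w : W // w ≠ b}) where
  Adj x y :=
    match x, y with
    | Sum.inl u, Sum.inl v => G.Adj u v
    | Sum.inl u, Sum.inr v => u = a ∧ H.Adj b v.1
    | Sum.inr v, Sum.inl u => u = a ∧ H.Adj b v.1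
    | Sum.inr u, Sum.inr v => H.Adj u.1 v.1
  symm := ⟨by
    rintro (u | u) (v | v) h
    · exact h.symm
    · exact h
    · exact h
    · exact h.symm⟩
  loopless := ⟨by
    rintro (u | u) h
    · exact G.irrefl h
    · exact H.irrefl h⟩

/-- `I_y(G_m, G_n)`: the one point union of `G_m = C_m ∨ K̄_2` and `G_n = C_n ∨ K̄_2`
obtained by identifying the vertices `y_m` and `y_n`. -/
def Iy (m n : ℕ) :
    SimpleGraph ((Fin m ⊕ Fin 2) ⊕ {w : Fin n ⊕ Fin 2 // w ≠ Sum.inr 1}) :=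
  onePointUnion (cycleJoinTwo m) (cycleJoinTwo n) (Sum.inr 1) (Sum.inr 1)

/-- A planar embedding of a graph `G`: an injective placement of the vertices in the
plane together with, for each edge, an arc (injective path) joining the images of its
endpoints, such that arcs do not pass through images of other vertices and two arcs of
distinct edges meet only in common endpoints. -/
structure PlanarEmbedding {V : Type*} (G : SimpleGraph V) where
  vmap : V → ℝ × ℝ
  vmap_inj : Function.Injective vmap
  arc : ∀ u v : V, G.Adj u v → Path (vmap u) (vmap v)
  arc_symm : ∀ (u v : V) (h : G.Adj u v), arc v u h.symm = (arc u v h).symm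
  arc_inj : ∀ (u v : V) (h : G.Adj u v), Function.Injective (arc u v h)
  arc_vertex : ∀ (u v : V) (h : G.Adj u v) (w : V),
    vmap w ∈ Set.range (arc u v h) → w = u ∨ w = v
  arc_disjoint : ∀ (u v u' v' : V) (h : G.Adj u v) (h' : G.Adj u' v'),
    s(u, v) ≠ s(u', v') →
    Set.range (arc u v h) ∩ Set.range (arc u' v' h') ⊆
      ({vmap u, vmap v} ∩ {vmap u', vmap v'} : Set (ℝ × ℝ))

/-- A graph is planar if it admits a planar embedding. -/
def IsPlanar {V : Type*} (G : SimpleGraph V) : Prop :=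
  Nonempty (PlanarEmbedding G)

/-!
Restricting a strong odd colouring of the wheel `W_k = C_k ∨ K_1` to the rim gives a colouring
of `C_k` in which vertices at distance one or two get different colours (the rim vertex between
two equally coloured ones would see that colour twice) and every colour class is odd (the hub
sees all rim vertices). Conversely such a rim colouring plus one fresh colour for the
hub is a strong odd colouring, so `χ_so(W_k) = g(k) + 1`, where `g(k)` is the least number of
colours of such a rim colouring.

In `I_y(G_m, G_n)` the same argument, with the hubs `x_m` and `x_n`, shows that each cycle uses
at least `g(m)`, resp. `g(n)`, colours with odd classes. The vertex `y` sees both cycles, so a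
colour used on both would be seen an even number of times; hence the two cycles use disjoint
colour sets, and `y` needs a further colour: `χ_so(I_y) ≥ g(m) + g(n) + 1`. For the converse
each `x` may reuse a colour of the opposite cycle, so `g(m) + g(n) + 1` colours suffice.
-/

open Function

theorem cycleGraph_adj_iff {k : ℕ} [NeZero k] (hk : 2 ≤ k) {i j : Fin k} :
    (cycleGraph k).Adj i j ↔ j = i - 1 ∨ j = i + 1 := by
  obtain ⟨k, rfl⟩ := Nat.exists_eq_add_of_le' hk
  rw [← mem_neighborSet, cycleGraph_neighborSet]
  rfl

theorem Fin.self_ne_add_two {k : ℕ} [NeZero k] (hk : 3 ≤ k) (i : Fin k) : i ≠ i + 2 := by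
  rw [ne_eq, left_eq_add, Fin.ext_iff, Fin.coe_ofNat_eq_mod, Fin.val_zero, Nat.mod_eq_of_lt hk]
  omega

theorem Set.ncard_preimage_sumElim {α β γ : Type*} [Finite α] [Finite β] (f : α → γ)
    (g : β → γ) (s : Set γ) : (Sum.elim f g ⁻¹' s).ncard = (f ⁻¹' s).ncard + (g ⁻¹' s).ncard := by
  rw [Set.preimage_sumElim, Set.ncard_union_eq Set.disjoint_image_inl_image_inr,
    Set.ncard_image_of_injective _ Sum.inl_injective,
    Set.ncard_image_of_injective _ Sum.inr_injective]

section OddFibers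

variable {ι κ α β : Type*}

def HasOddFibers (φ : ι → α) : Prop :=
  ∀ c, (φ ⁻¹' {c}).ncard = 0 ∨ Odd (φ ⁻¹' {c}).ncard

theorem hasOddFibers_comp_iff {e : α → β} (he : Injective e) {φ : ι → α} :
    HasOddFibers (e ∘ φ) ↔ HasOddFibers φ := by
  have hfiber (d : α) : (e ∘ φ) ⁻¹' {e d} = φ ⁻¹' {d} := by
    rw [Set.preimage_comp, ← Set.image_singleton, he.preimage_image]
  refine ⟨fun h d => hfiber d ▸ h (e d), fun h c => ?_⟩
  by_cases hc : c ∈ Set.range e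
  · obtain ⟨d, rfl⟩ := hc
    exact (hfiber d).symm ▸ h d
  · left
    rw [Set.preimage_comp, Set.preimage_singleton_eq_empty.mpr hc, Set.preimage_empty,
      Set.ncard_empty]

theorem HasOddFibers.odd_of_mem_range [Finite ι] {f : ι → α} (hf : HasOddFibers f) {c : α}
    (hc : c ∈ Set.range f) : Odd (f ⁻¹' {c}).ncard :=
  (hf c).resolve_left ((Set.ncard_pos (Set.toFinite (f ⁻¹' {c}))).mpr hc).ne'

theorem HasOddFibers.disjoint_range [Finite ι] [Finite κ] {f : ι → α} {g : κ → α}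
    (h : HasOddFibers (Sum.elim f g)) (hf : HasOddFibers f) (hg : HasOddFibers g) :
    Disjoint (Set.range f) (Set.range g) := by
  rw [Set.disjoint_left]
  intro c hcf hcg
  have hodd_f := hf.odd_of_mem_range hcf
  have hodd_g := hg.odd_of_mem_range hcg
  rcases h c with hzero | hodd
  · rw [Set.ncard_preimage_sumElim] at hzero
    exact hodd_f.pos.ne' (by omega)
  · rw [Set.ncard_preimage_sumElim] at hodd
    exact Nat.not_odd_iff_even.mpr (hodd_f.add_odd hodd_g) hodd

theorem HasOddFibers.sumElim [Finite ι] [Finite κ] {f : ι → α} {g : κ → α} (hf : HasOddFibers f)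
    (hg : HasOddFibers g) (hfg : Disjoint (Set.range f) (Set.range g)) :
    HasOddFibers (Sum.elim f g) := by
  intro c
  rw [Set.ncard_preimage_sumElim]
  by_cases hc : c ∈ Set.range f
  · rw [Set.preimage_singleton_eq_empty.mpr (Set.disjoint_left.mp hfg hc), Set.ncard_empty,
      add_zero]
    exact hf c
  · rw [Set.preimage_singleton_eq_empty.mpr hc, Set.ncard_empty, zero_add]
    exact hg c

end OddFibers

section StrongOddColoring

variable {V ι α β : Type*} {G : SimpleGraph V} {φ : V → α}

theorem IsStrongOddColoring.comp_injective (hφ : IsStrongOddColoring G φ) {e : α → β}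
    (he : Injective e) : IsStrongOddColoring G (e ∘ φ) := by
  refine ⟨fun u v huv => he.ne (hφ.1 u v huv), fun v c => ?_⟩
  by_cases hc : c ∈ Set.range e
  · obtain ⟨d, rfl⟩ := hc
    simpa only [comp_apply, he.eq_iff] using hφ.2 v d
  · left
    have hempty : {u | G.Adj v u ∧ (e ∘ φ) u = c} = ∅ :=
      Set.eq_empty_of_forall_notMem fun u hu => hc ⟨_, hu.2⟩
    rw [hempty, Set.ncard_empty]

theorem zero_or_odd_of_injOn_neighborSet {v : V} (h : Set.InjOn φ (G.neighborSet v)) (c : α) :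
    {u | G.Adj v u ∧ φ u = c}.ncard = 0 ∨ Odd {u | G.Adj v u ∧ φ u = c}.ncard := by
  have hsub : {u | G.Adj v u ∧ φ u = c}.Subsingleton := fun x hx y hy =>
    h hx.1 hy.1 (hx.2.trans hy.2.symm)
  rcases hsub.eq_empty_or_singleton with hempty | ⟨x, hx⟩
  · left
    rw [hempty, Set.ncard_empty]
  · right
    rw [hx, Set.ncard_singleton]
    exact odd_one

theorem ncard_setOf_adj_and_eq {v : V} {f : ι → V} (hf : Injective f)
    (hv : G.neighborSet v = Set.range f) (c : α) :
    {u | G.Adj v u ∧ φ u = c}.ncard = ((φ ∘ f) ⁻¹' {c}).ncard := by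
  have : {u | G.Adj v u ∧ φ u = c} = f '' ((φ ∘ f) ⁻¹' {c}) := by
    rw [Set.preimage_comp, Set.image_preimage_eq_range_inter, ← hv]
    rfl
  rw [this, Set.ncard_image_of_injective _ hf]

theorem IsStrongOddColoring.hasOddFibers_comp (hφ : IsStrongOddColoring G φ) {v : V}
    {f : ι → V} (hf : Injective f) (hv : G.neighborSet v = Set.range f) :
    HasOddFibers (φ ∘ f) := fun c =>
  ncard_setOf_adj_and_eq hf hv c ▸ hφ.2 v c

theorem strongOddChromaticNumber_eq_of_le [Fintype α] {N : ℕ} (hφ : IsStrongOddColoring G φ)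
    (hcard : Fintype.card α = N)
    (hmin : ∀ {K : ℕ} {ψ : V → Fin K}, IsStrongOddColoring G ψ → N ≤ (Set.range ψ).ncard) :
    strongOddChromaticNumber G = N := by
  subst hcard
  have hfin := hφ.comp_injective (Fintype.equivFin α).injective
  refine le_antisymm (Nat.sInf_le ⟨_, hfin⟩) (le_csInf ⟨_, _, hfin⟩ ?_)
  rintro K ⟨ψ, hψ⟩
  calc Fintype.card α ≤ (Set.range ψ).ncard := hmin hψ
    _ ≤ Nat.card (Fin K) := Set.ncard_le_card _
    _ = K := Nat.card_fin K

end StrongOddColoring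

section CycleSquare

variable {k : ℕ} [NeZero k] {α β : Type*}

structure IsOddCycleSqColoring (φ : Fin k → α) : Prop where
  ne_add_one : ∀ i, φ i ≠ φ (i + 1)
  ne_add_two : ∀ i, φ i ≠ φ (i + 2)
  hasOddFibers : HasOddFibers φ

theorem isOddCycleSqColoring_comp_iff {e : α → β} (he : Injective e) {φ : Fin k → α} :
    IsOddCycleSqColoring (e ∘ φ) ↔ IsOddCycleSqColoring φ :=
  ⟨fun ⟨h1, h2, h3⟩ => ⟨fun i => he.ne_iff.mp (h1 i), fun i => he.ne_iff.mp (h2 i),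
      (hasOddFibers_comp_iff he).mp h3⟩,
    fun ⟨h1, h2, h3⟩ => ⟨fun i => he.ne (h1 i), fun i => he.ne (h2 i),
      (hasOddFibers_comp_iff he).mpr h3⟩⟩

theorem IsOddCycleSqColoring.apply_ne_of_adj {φ : Fin k → α} (hφ : IsOddCycleSqColoring φ)
    (hk : 2 ≤ k) {i j : Fin k} (hij : (cycleGraph k).Adj i j) : φ i ≠ φ j := by
  rcases (cycleGraph_adj_iff hk).mp hij with rfl | rfl
  · simpa using (hφ.ne_add_one (i - 1)).symm
  · exact hφ.ne_add_one i

open Fin.CommRing in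
theorem IsOddCycleSqColoring.apply_sub_one_ne_apply_add_one {φ : Fin k → α}
    (hφ : IsOddCycleSqColoring φ) (i : Fin k) : φ (i - 1) ≠ φ (i + 1) := by
  simpa only [show i - 1 + 2 = i + 1 by ring] using hφ.ne_add_two (i - 1)

variable (k) in
noncomputable def cycleSqOddChromaticNumber : ℕ :=
  sInf {g | ∃ φ : Fin k → Fin g, IsOddCycleSqColoring φ}

theorem exists_isOddCycleSqColoring (hk : 3 ≤ k) :
    ∃ φ : Fin k → Fin (cycleSqOddChromaticNumber k), IsOddCycleSqColoring φ := by
  have hid : IsOddCycleSqColoring (id : Fin k → Fin k) :=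
    ⟨fun i => ((cycleGraph_adj_iff (by omega)).mpr (.inr rfl)).ne, Fin.self_ne_add_two hk,
      fun c => .inr (by simp)⟩
  exact Nat.sInf_mem (s := {g | ∃ φ : Fin k → Fin g, IsOddCycleSqColoring φ}) ⟨k, id, hid⟩

theorem IsOddCycleSqColoring.cycleSqOddChromaticNumber_le {ψ : Fin k → α}
    (hψ : IsOddCycleSqColoring ψ) : cycleSqOddChromaticNumber k ≤ (Set.range ψ).ncard := by
  let e : Set.range ψ ≃ Fin (Set.range ψ).ncard := Finite.equivFin _
  refine Nat.sInf_le ⟨e ∘ Set.rangeFactorization ψ, ?_⟩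
  rwa [isOddCycleSqColoring_comp_iff e.injective,
    ← isOddCycleSqColoring_comp_iff Subtype.val_injective]

open Fin.CommRing in
theorem IsStrongOddColoring.isOddCycleSqColoring_comp {V : Type*} {G : SimpleGraph V}
    {φ : V → α} (hφ : IsStrongOddColoring G φ) (hk : 3 ≤ k) {f : Fin k → V} (hf : Injective f)
    (hcycle : ∀ i j, G.Adj (f i) (f j) ↔ (cycleGraph k).Adj i j) {h : V}
    (hhub : G.neighborSet h = Set.range f)
    (hdom : ∀ i u, G.Adj (f i) u → u ∉ Set.range f → ∀ j, G.Adj u (f j)) :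
    IsOddCycleSqColoring (φ ∘ f) where
  ne_add_one i := hφ.1 _ _ ((hcycle _ _).mpr ((cycleGraph_adj_iff (by omega)).mpr (.inr rfl)))
  ne_add_two i heq := by
    have hclass : {u | G.Adj (f (i + 1)) u ∧ φ u = φ (f i)} = {f i, f (i + 2)} := by
      ext u
      constructor
      · rintro ⟨hadj, hu⟩
        by_cases hu_cycle : u ∈ Set.range f
        · obtain ⟨j, rfl⟩ := hu_cycle
          rcases (cycleGraph_adj_iff (by omega)).mp ((hcycle _ _).mp hadj) with rfl | rfl
          · exact .inl (congrArg f (by ring))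
          · exact .inr (congrArg f (by ring))
        · exact absurd hu (hφ.1 _ _ (hdom _ _ hadj hu_cycle i))
      · rintro (rfl | rfl)
        · exact ⟨(hcycle _ _).mpr ((cycleGraph_adj_iff (by omega)).mpr (.inl (by ring))), rfl⟩
        · exact ⟨(hcycle _ _).mpr ((cycleGraph_adj_iff (by omega)).mpr (.inr (by ring))),
            heq.symm⟩
    have hcount := hφ.2 (f (i + 1)) (φ (f i))
    rw [hclass, Set.ncard_pair (hf.ne (Fin.self_ne_add_two hk i))] at hcount
    exact absurd hcount (by decide)
  hasOddFibers := hφ.hasOddFibers_comp hf hhub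

end CycleSquare

section Wheel

variable {k : ℕ} [NeZero k] {α : Type*}

theorem wheelGraph_neighborSet_inl (hk : 2 ≤ k) (i : Fin k) :
    (wheelGraph k).neighborSet (.inl i) = {.inl (i - 1), .inl (i + 1), .inr 0} := by
  ext (j | z) <;> simp [wheelGraph, joinGraph, cycleGraph_adj_iff hk, Fin.fin_one_eq_zero]

theorem wheelGraph_neighborSet_inr (z : Fin 1) :
    (wheelGraph k).neighborSet (.inr z) = Set.range .inl := by
  ext (j | z') <;> simp [wheelGraph, joinGraph]

def wheelColoring (φ : Fin k → α) : Fin k ⊕ Fin 1 → Option α :=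
  Sum.elim (some ∘ φ) fun _ => none

theorem isStrongOddColoring_wheelColoring (hk : 3 ≤ k) {φ : Fin k → α}
    (hφ : IsOddCycleSqColoring φ) : IsStrongOddColoring (wheelGraph k) (wheelColoring φ) := by
  refine ⟨?_, ?_⟩
  · rintro (i | z) (j | z') hadj
    · exact (Option.some_injective _).ne (hφ.apply_ne_of_adj (by omega) hadj)
    · exact Option.some_ne_none _
    · exact (Option.some_ne_none _).symm
    · exact hadj.elim
  · rintro (i | z) c
    · apply zero_or_odd_of_injOn_neighborSet
      rw [wheelGraph_neighborSet_inl (by omega)]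
      have := hφ.apply_sub_one_ne_apply_add_one i
      rintro _ (rfl | rfl | rfl) _ (rfl | rfl | rfl) h <;> simp_all [wheelColoring]
    · rw [ncard_setOf_adj_and_eq Sum.inl_injective (wheelGraph_neighborSet_inr z)]
      exact (hasOddFibers_comp_iff (Option.some_injective _)).mpr hφ.hasOddFibers c

theorem le_ncard_range_of_isStrongOddColoring_wheelGraph (hk : 3 ≤ k)
    {Φ : Fin k ⊕ Fin 1 → α} (hΦ : IsStrongOddColoring (wheelGraph k) Φ) :
    cycleSqOddChromaticNumber k + 1 ≤ (Set.range Φ).ncard := by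
  have hrim : IsOddCycleSqColoring (Φ ∘ Sum.inl) := by
    refine hΦ.isOddCycleSqColoring_comp hk Sum.inl_injective (fun _ _ => Iff.rfl)
      (wheelGraph_neighborSet_inr 0) ?_
    rintro i (j | z) - hu j'
    · exact absurd ⟨j, rfl⟩ hu
    · trivial
  have hhub : Φ (.inr 0) ∉ Set.range (Φ ∘ Sum.inl) := by
    rintro ⟨i, hi⟩
    exact hΦ.1 (.inl i) (.inr 0) trivial hi
  calc cycleSqOddChromaticNumber k + 1 ≤ (Set.range (Φ ∘ Sum.inl)).ncard + 1 := by
        gcongr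
        exact hrim.cycleSqOddChromaticNumber_le
    _ = (insert (Φ (.inr 0)) (Set.range (Φ ∘ Sum.inl))).ncard :=
        (Set.ncard_insert_of_notMem hhub).symm
    _ ≤ (Set.range Φ).ncard :=
        Set.ncard_le_ncard (Set.insert_subset (Set.mem_range_self _)
          (Set.range_comp_subset_range _ _))

theorem strongOddChromaticNumber_wheelGraph (hk : 3 ≤ k) :
    strongOddChromaticNumber (wheelGraph k) = cycleSqOddChromaticNumber k + 1 := by
  obtain ⟨φ, hφ⟩ := exists_isOddCycleSqColoring hk
  exact strongOddChromaticNumber_eq_of_le (isStrongOddColoring_wheelColoring hk hφ) (by simp)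
    fun hΨ => le_ncard_range_of_isStrongOddColoring_wheelGraph hk hΨ

end Wheel

abbrev IyVertex (m n : ℕ) := (Fin m ⊕ Fin 2) ⊕ {w : Fin n ⊕ Fin 2 // w ≠ Sum.inr 1}

namespace Iy

variable {m n : ℕ} {α β : Type*}

-- In the paper's notation `leftHub = x_m`, `apex = y` and `rightHub = x_n`.

def leftCycle (i : Fin m) : IyVertex m n := .inl (.inl i)

def rightCycle (j : Fin n) : IyVertex m n := .inr ⟨.inl j, Sum.inl_ne_inr⟩

def leftHub : IyVertex m n := .inl (.inr 0)

def apex : IyVertex m n := .inl (.inr 1)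

def rightHub : IyVertex m n := .inr ⟨.inr 0, Sum.inr_injective.ne (by decide)⟩

theorem vertex_cases (v : IyVertex m n) :
    (∃ i, v = leftCycle i) ∨ v = leftHub ∨ v = apex ∨ (∃ j, v = rightCycle j) ∨ v = rightHub := by
  rcases v with (i | c) | ⟨w | c, hw⟩
  · exact .inl ⟨i, rfl⟩
  · fin_cases c
    · exact .inr (.inl rfl)
    · exact .inr (.inr (.inl rfl))
  · exact .inr (.inr (.inr (.inl ⟨w, rfl⟩)))
  · fin_cases c
    · exact .inr (.inr (.inr (.inr rfl)))
    · exact absurd rfl hw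

theorem leftCycle_injective : Injective (leftCycle : Fin m → IyVertex m n) :=
  fun _ _ h => by simpa [leftCycle] using h

theorem rightCycle_injective : Injective (rightCycle : Fin n → IyVertex m n) :=
  fun _ _ h => by simpa [rightCycle] using h

theorem sumElim_leftCycle_rightCycle_injective :
    Injective (Sum.elim leftCycle rightCycle : Fin m ⊕ Fin n → IyVertex m n) :=
  leftCycle_injective.sumElim rightCycle_injective fun _ _ => Sum.inl_ne_inr

theorem neighborSet_leftCycle [NeZero m] (hm : 2 ≤ m) (i : Fin m) :
    (Iy m n).neighborSet (leftCycle i) =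
      {leftCycle (i - 1), leftCycle (i + 1), leftHub, apex} := by
  ext u
  obtain ⟨_, rfl⟩ | rfl | rfl | ⟨_, rfl⟩ | rfl := vertex_cases u <;>
    simp [Iy, onePointUnion, cycleJoinTwo, joinGraph, leftCycle, rightCycle, leftHub, rightHub,
      apex, cycleGraph_adj_iff hm]

theorem neighborSet_leftHub : (Iy m n).neighborSet leftHub = Set.range leftCycle := by
  ext u
  obtain ⟨_, rfl⟩ | rfl | rfl | ⟨_, rfl⟩ | rfl := vertex_cases u <;>
    simp [Iy, onePointUnion, cycleJoinTwo, joinGraph, leftCycle, rightCycle, leftHub, rightHub,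
      apex]

theorem neighborSet_apex :
    (Iy m n).neighborSet apex = Set.range (Sum.elim leftCycle rightCycle) := by
  ext u
  obtain ⟨_, rfl⟩ | rfl | rfl | ⟨_, rfl⟩ | rfl := vertex_cases u <;>
    simp [Iy, onePointUnion, cycleJoinTwo, joinGraph, leftCycle, rightCycle, leftHub, rightHub,
      apex]

theorem neighborSet_rightCycle [NeZero n] (hn : 2 ≤ n) (j : Fin n) :
    (Iy m n).neighborSet (rightCycle j) =
      {rightCycle (j - 1), rightCycle (j + 1), rightHub, apex} := by
  ext u
  obtain ⟨_, rfl⟩ | rfl | rfl | ⟨_, rfl⟩ | rfl := vertex_cases u <;>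
    simp [Iy, onePointUnion, cycleJoinTwo, joinGraph, leftCycle, rightCycle, leftHub, rightHub,
      apex, cycleGraph_adj_iff hn]

theorem neighborSet_rightHub : (Iy m n).neighborSet rightHub = Set.range rightCycle := by
  ext u
  obtain ⟨_, rfl⟩ | rfl | rfl | ⟨_, rfl⟩ | rfl := vertex_cases u <;>
    simp [Iy, onePointUnion, cycleJoinTwo, joinGraph, leftCycle, rightCycle, leftHub, rightHub,
      apex]

theorem apex_adj_leftCycle (i : Fin m) : (Iy m n).Adj apex (leftCycle i) := by
  rw [← mem_neighborSet, neighborSet_apex]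
  exact ⟨.inl i, rfl⟩

theorem apex_adj_rightCycle (j : Fin n) : (Iy m n).Adj apex (rightCycle j) := by
  rw [← mem_neighborSet, neighborSet_apex]
  exact ⟨.inr j, rfl⟩

theorem leftHub_adj_leftCycle (i : Fin m) : (Iy m n).Adj leftHub (leftCycle i) := by
  rw [← mem_neighborSet, neighborSet_leftHub]
  exact ⟨i, rfl⟩

theorem rightHub_adj_rightCycle (j : Fin n) : (Iy m n).Adj rightHub (rightCycle j) := by
  rw [← mem_neighborSet, neighborSet_rightHub]
  exact ⟨j, rfl⟩

theorem le_ncard_range_of_isStrongOddColoring [NeZero m] [NeZero n] (hm : 3 ≤ m) (hn : 3 ≤ n)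
    {Φ : IyVertex m n → α} (hΦ : IsStrongOddColoring (Iy m n) Φ) :
    cycleSqOddChromaticNumber m + cycleSqOddChromaticNumber n + 1 ≤ (Set.range Φ).ncard := by
  have hleft : IsOddCycleSqColoring (Φ ∘ leftCycle) := by
    refine hΦ.isOddCycleSqColoring_comp hm leftCycle_injective (fun _ _ => Iff.rfl)
      neighborSet_leftHub fun i u hu hu_cycle j => ?_
    rw [← mem_neighborSet, neighborSet_leftCycle (by omega)] at hu
    rcases hu with rfl | rfl | rfl | rfl
    · exact absurd ⟨_, rfl⟩ hu_cycle
    · exact absurd ⟨_, rfl⟩ hu_cycle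
    · exact leftHub_adj_leftCycle j
    · exact apex_adj_leftCycle j
  have hright : IsOddCycleSqColoring (Φ ∘ rightCycle) := by
    refine hΦ.isOddCycleSqColoring_comp hn rightCycle_injective (fun _ _ => Iff.rfl)
      neighborSet_rightHub fun i u hu hu_cycle j => ?_
    rw [← mem_neighborSet, neighborSet_rightCycle (by omega)] at hu
    rcases hu with rfl | rfl | rfl | rfl
    · exact absurd ⟨_, rfl⟩ hu_cycle
    · exact absurd ⟨_, rfl⟩ hu_cycle
    · exact rightHub_adj_rightCycle j
    · exact apex_adj_rightCycle j
  have hapex : HasOddFibers (Sum.elim (Φ ∘ leftCycle) (Φ ∘ rightCycle)) := by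
    rw [← Sum.comp_elim]
    exact hΦ.hasOddFibers_comp sumElim_leftCycle_rightCycle_injective neighborSet_apex
  have hdisj := hapex.disjoint_range hleft.hasOddFibers hright.hasOddFibers
  have hfresh : Φ apex ∉ Set.range (Φ ∘ leftCycle) ∪ Set.range (Φ ∘ rightCycle) := by
    rintro (⟨i, hi⟩ | ⟨j, hj⟩)
    · exact hΦ.1 _ _ (apex_adj_leftCycle i) hi.symm
    · exact hΦ.1 _ _ (apex_adj_rightCycle j) hj.symm
  calc cycleSqOddChromaticNumber m + cycleSqOddChromaticNumber n + 1
      ≤ (Set.range (Φ ∘ leftCycle)).ncard + (Set.range (Φ ∘ rightCycle)).ncard + 1 := by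
        gcongr
        · exact hleft.cycleSqOddChromaticNumber_le
        · exact hright.cycleSqOddChromaticNumber_le
    _ = (insert (Φ apex) (Set.range (Φ ∘ leftCycle) ∪ Set.range (Φ ∘ rightCycle))).ncard := by
        rw [Set.ncard_insert_of_notMem hfresh, Set.ncard_union_eq hdisj]
    _ ≤ (Set.range Φ).ncard :=
        Set.ncard_le_ncard (Set.insert_subset (Set.mem_range_self _)
          (Set.union_subset (Set.range_comp_subset_range _ _) (Set.range_comp_subset_range _ _)))

def coloring [NeZero m] [NeZero n] (φm : Fin m → α) (φn : Fin n → β) :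
    IyVertex m n → Option (α ⊕ β)
  | .inl (.inl i) => some (.inl (φm i))
  | .inl (.inr c) => if c = 0 then some (.inr (φn 0)) else none
  | .inr ⟨.inl j, _⟩ => some (.inr (φn j))
  | .inr ⟨.inr _, _⟩ => some (.inl (φm 0))

section Coloring

variable [NeZero m] [NeZero n] {φm : Fin m → α} {φn : Fin n → β}

@[simp] theorem coloring_leftCycle (i : Fin m) :
    coloring φm φn (leftCycle i) = some (.inl (φm i)) := rfl

@[simp] theorem coloring_leftHub : coloring φm φn leftHub = some (.inr (φn 0)) := rfl

@[simp] theorem coloring_apex : coloring φm φn apex = none := rfl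

@[simp] theorem coloring_rightCycle (j : Fin n) :
    coloring φm φn (rightCycle j) = some (.inr (φn j)) := rfl

@[simp] theorem coloring_rightHub : coloring φm φn rightHub = some (.inl (φm 0)) := rfl

theorem isStrongOddColoring_coloring (hm : 3 ≤ m) (hn : 3 ≤ n) (hφm : IsOddCycleSqColoring φm) (hφn : IsOddCycleSqColoring φn) :
    IsStrongOddColoring (Iy m n) (coloring φm φn) := by
  refine ⟨fun v u hvu => ?_, fun v c => ?_⟩
  · rw [← mem_neighborSet] at hvu
    obtain ⟨i, rfl⟩ | rfl | rfl | ⟨j, rfl⟩ | rfl := vertex_cases v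
    · rw [neighborSet_leftCycle (by omega)] at hvu
      have h1 := hφm.ne_add_one i
      have h2 := (hφm.ne_add_one (i - 1)).symm
      rcases hvu with rfl | rfl | rfl | rfl <;> simp_all
    · rw [neighborSet_leftHub] at hvu
      obtain ⟨i, rfl⟩ := hvu
      simp
    · rw [neighborSet_apex] at hvu
      obtain ⟨i | j, rfl⟩ := hvu <;> simp
    · rw [neighborSet_rightCycle (by omega)] at hvu
      have h1 := hφn.ne_add_one j
      have h2 := (hφn.ne_add_one (j - 1)).symm
      rcases hvu with rfl | rfl | rfl | rfl <;> simp_all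
    · rw [neighborSet_rightHub] at hvu
      obtain ⟨j, rfl⟩ := hvu
      simp
  · have hleft : HasOddFibers (coloring φm φn ∘ leftCycle) :=
      (hasOddFibers_comp_iff ((Option.some_injective _).comp Sum.inl_injective)).mpr
        hφm.hasOddFibers
    have hright : HasOddFibers (coloring φm φn ∘ rightCycle) :=
      (hasOddFibers_comp_iff ((Option.some_injective _).comp Sum.inr_injective)).mpr
        hφn.hasOddFibers
    obtain ⟨i, rfl⟩ | rfl | rfl | ⟨j, rfl⟩ | rfl := vertex_cases v
    · apply zero_or_odd_of_injOn_neighborSet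
      rw [neighborSet_leftCycle (by omega)]
      have := hφm.apply_sub_one_ne_apply_add_one i
      rintro _ (rfl | rfl | rfl | rfl) _ (rfl | rfl | rfl | rfl) h <;> simp_all
    · rw [ncard_setOf_adj_and_eq leftCycle_injective neighborSet_leftHub]
      exact hleft c
    · rw [ncard_setOf_adj_and_eq sumElim_leftCycle_rightCycle_injective neighborSet_apex,
        Sum.comp_elim]
      refine hleft.sumElim hright ?_ c
      rw [Set.disjoint_left]
      rintro _ ⟨i, rfl⟩ ⟨j, hj⟩
      simp at hj
    · apply zero_or_odd_of_injOn_neighborSet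
      rw [neighborSet_rightCycle (by omega)]
      have := hφn.apply_sub_one_ne_apply_add_one j
      rintro _ (rfl | rfl | rfl | rfl) _ (rfl | rfl | rfl | rfl) h <;> simp_all
    · rw [ncard_setOf_adj_and_eq rightCycle_injective neighborSet_rightHub]
      exact hright c

end Coloring

end Iy

theorem strongOddChromaticNumber_Iy {m n : ℕ} [NeZero m] [NeZero n] (hm : 3 ≤ m) (hn : 3 ≤ n) :
    strongOddChromaticNumber (Iy m n) =
      cycleSqOddChromaticNumber m + cycleSqOddChromaticNumber n + 1 := by
  obtain ⟨φm, hφm⟩ := exists_isOddCycleSqColoring hm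
  obtain ⟨φn, hφn⟩ := exists_isOddCycleSqColoring hn
  exact strongOddChromaticNumber_eq_of_le (Iy.isStrongOddColoring_coloring hm hn hφm hφn)
    (by simp) fun hΨ => Iy.le_ncard_range_of_isStrongOddColoring hm hn hΨ

/-- For `m, n ≥ 3`, the strong odd chromatic number of `I_y(G_m, G_n)` equals
`χ_so(W_m) + χ_so(W_n) - 1`. -/
theorem stmt_9 (m n : ℕ) (hm : 3 ≤ m) (hn : 3 ≤ n) :
    strongOddChromaticNumber (Iy m n) =
      strongOddChromaticNumber (wheelGraph m) + strongOddChromaticNumber (wheelGraph n) - 1 := by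
  have : NeZero m := ⟨by omega⟩
  have : NeZero n := ⟨by omega⟩
  rw [strongOddChromaticNumber_Iy hm hn, strongOddChromaticNumber_wheelGraph hm,
    strongOddChromaticNumber_wheelGraph hn]
  omega
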